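/- (ExtractScalar EFT) For a signed P3109 format f with P ≥ 1, let σ = 2^i ∈ V_f for some integer i, and let x ∈ V_f with |x| ≤ 2^(−j)·σ for some integer j ≥ 0. Assume |σ + x| ≤ M_hi. Let s be a round-to-nearest value of σ + x, x_h = s − σ (exactly representable), and x_ℓ a faithful rounding of x − x_h. Then x = x_h + x_ℓ. -/
import Mathlib


/-- Finite value set of a signed P3109 format with precision `P` and
exponent range `emin ≤ emax`. -/
def Vf (P : ℕ) (emin emax : ℤ) : Set ℝ :=
  { x | ∃ m e : ℤ, |m| < 2 ^ P ∧ emin ≤ e ∧ e ≤ emax ∧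
      x = (m : ℝ) * (2 : ℝ) ^ (e - (P : ℤ) + 1) }

/-- Largest finite magnitude. -/
noncomputable def Mhi (P : ℕ) (emax : ℤ) : ℝ :=
  ((2 : ℝ) ^ P - 1) * (2 : ℝ) ^ (emax - (P : ℤ) + 1)

/-- Canonical exponent: `max (⌊log₂ |x|⌋) emin` for `x ≠ 0`, `emin` for `x = 0`. -/
noncomputable def expo (emin : ℤ) (x : ℝ) : ℤ :=
  if x = 0 then emin else max (Int.log 2 |x|) emin

/-- `s` is a faithful rounding of `r` in `V`: it is `r` itself if `r ∈ V`,
and otherwise a floating-point neighbor (predecessor or successor) of `r`. -/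
def Faithful (V : Set ℝ) (r s : ℝ) : Prop :=
  s ∈ V ∧ (r ∈ V → s = r) ∧
    ((s ≤ r ∧ ∀ v ∈ V, v ≤ r → v ≤ s) ∨ (r ≤ s ∧ ∀ v ∈ V, r ≤ v → s ≤ v))

/-- `s` is a round-to-nearest value of `r` in `V` (arbitrary tie-breaking). -/
def Nearest (V : Set ℝ) (r s : ℝ) : Prop :=
  s ∈ V ∧ ∀ v ∈ V, |s - r| ≤ |v - r|

lemma tz_pos (a : ℤ) : (0:ℝ) < 2 ^ a := zpow_pos (by norm_num) a
lemma tz_le {a b : ℤ} (h : a ≤ b) : (2:ℝ) ^ a ≤ 2 ^ b := zpow_le_zpow_right₀ one_le_two h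
lemma tz_lt {a b : ℤ} (h : a < b) : (2:ℝ) ^ a < 2 ^ b := zpow_lt_zpow_right₀ one_lt_two h

lemma rpow_toNat {a c : ℤ} (h : c ≤ a) : (2:ℝ) ^ ((a - c).toNat) * (2:ℝ) ^ c = 2 ^ a := by
  rw [← zpow_natCast (2:ℝ), Int.toNat_of_nonneg (by linarith), ← zpow_add₀ (by norm_num : (2:ℝ) ≠ 0)]
  ring_nf

lemma cast_pow_P (P : ℕ) : ((2 ^ P : ℤ) : ℝ) = (2:ℝ) ^ (P : ℤ) := by push_cast [zpow_natCast]; ring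

lemma abs_int_lt_of_real {t : ℤ} {P : ℕ} (h : |(t:ℝ)| < 2 ^ (P:ℤ)) : |t| < 2 ^ P := by
  have : ((|t| : ℤ) : ℝ) < ((2 ^ P : ℤ) : ℝ) := by rw [cast_pow_P]; rwa [Int.cast_abs]
  exact_mod_cast this

lemma grid_mem (P : ℕ) (emin emax : ℤ) (he : emin ≤ emax) (t c : ℤ)
    (hc : emin - P + 1 ≤ c)
    (h1 : |(t:ℝ)| * 2 ^ c < 2 ^ (c + P))
    (h2 : |(t:ℝ)| * 2 ^ c < 2 ^ (emax + 1)) :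
    (t:ℝ) * (2:ℝ) ^ c ∈ Vf P emin emax := by
  by_cases hce : c + P - 1 ≤ emax
  · refine ⟨t, c + P - 1, ?_, by linarith, hce, by rw [show c + (P:ℤ) - 1 - P + 1 = c by ring]⟩
    apply abs_int_lt_of_real
    have hcp : (2:ℝ) ^ (c + (P:ℤ)) = 2 ^ (P:ℤ) * 2 ^ c := by
      rw [← zpow_add₀ (by norm_num : (2:ℝ) ≠ 0)]; ring_nf
    rw [hcp] at h1
    exact lt_of_mul_lt_mul_right h1 (tz_pos c).le
  · push_neg at hce
    have hW : emax - P + 1 ≤ c := by linarith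
    refine ⟨t * 2 ^ (c - (emax - P + 1)).toNat, emax, ?_, he, le_refl _, ?_⟩
    · apply abs_int_lt_of_real
      have : |(t:ℝ)| * 2 ^ (c - (emax - P + 1)).toNat < 2 ^ (P:ℤ) := by
        have hmul : (2:ℝ) ^ (emax + 1) = 2 ^ (P:ℤ) * 2 ^ (emax - P + 1) := by
          rw [← zpow_add₀ (by norm_num : (2:ℝ) ≠ 0)]; ring_nf
        have h3 : |(t:ℝ)| * 2 ^ (c - (emax - P + 1)).toNat * 2 ^ (emax - (P:ℤ) + 1)
            < 2 ^ (P:ℤ) * 2 ^ (emax - (P:ℤ) + 1) := by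
          rw [mul_assoc, rpow_toNat hW]; rw [hmul] at h2; exact h2
        exact lt_of_mul_lt_mul_right h3 (tz_pos _).le
      calc |((t * 2 ^ (c - (emax - P + 1)).toNat : ℤ) : ℝ)|
          = |(t:ℝ)| * 2 ^ (c - (emax - P + 1)).toNat := by
            push_cast [abs_mul]; rw [abs_of_nonneg (by positivity : (0:ℝ) ≤ (2:ℝ) ^ (c - (emax - P + 1)).toNat)]
        _ < 2 ^ (P:ℤ) := this
    · push_cast
      rw [mul_assoc, rpow_toNat hW]

lemma neg_mem_Vf {P : ℕ} {emin emax : ℤ} {y : ℝ} (h : y ∈ Vf P emin emax) :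
    -y ∈ Vf P emin emax := by
  obtain ⟨m, e, h1, h2, h3, h4⟩ := h
  exact ⟨-m, e, by simpa using h1, h2, h3, by rw [h4]; push_cast; ring⟩

lemma abs_le_Mhi {P : ℕ} {emin emax : ℤ} {y : ℝ} (h : y ∈ Vf P emin emax) :
    |y| ≤ Mhi P emax := by
  obtain ⟨m, e, h1, h2, h3, h4⟩ := h
  have hm : |(m:ℝ)| ≤ (2:ℝ) ^ P - 1 := by
    have hi : |m| ≤ 2 ^ P - 1 := by omega
    have : ((|m| : ℤ) : ℝ) ≤ ((2 ^ P - 1 : ℤ) : ℝ) := by exact_mod_cast hi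
    push_cast at this
    exact this
  rw [h4, Mhi, abs_mul, abs_of_nonneg (tz_pos (e - P + 1)).le]
  have hple : (1:ℝ) ≤ (2:ℝ) ^ P := one_le_pow₀ (by norm_num)
  exact mul_le_mul hm (tz_le (by linarith)) (tz_pos _).le (by linarith)

lemma int_odd_decomp (m : ℤ) (hm : m ≠ 0) :
    ∃ (k : ℕ) (n : ℤ), Odd n ∧ |n| ≤ |m| ∧ m = n * 2 ^ k := by
  obtain ⟨k, n0, hdvd, hEq⟩ := Nat.exists_eq_pow_mul_and_not_dvd
    (Int.natAbs_ne_zero.mpr hm) 2 (by norm_num)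
  have hodd0 : Odd n0 := Nat.odd_iff.mpr (Nat.two_dvd_ne_zero.mp hdvd)
  have habs : |m| = (n0 : ℤ) * 2 ^ k := by
    have := congrArg (Nat.cast : ℕ → ℤ) hEq
    push_cast at this
    linarith
  have key : ∀ n : ℤ, Odd n → m = n * 2 ^ k →
      ∃ (k : ℕ) (n : ℤ), Odd n ∧ |n| ≤ |m| ∧ m = n * 2 ^ k := by
    intro n hodd hmeq
    refine ⟨k, n, hodd, ?_, hmeq⟩
    have h2k : (1:ℤ) ≤ 2 ^ k := one_le_pow₀ (by norm_num)
    rw [hmeq, abs_mul, abs_of_nonneg (by positivity : (0:ℤ) ≤ 2 ^ k)]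
    nlinarith [abs_nonneg n]
  rcases abs_choice m with h | h
  · exact key n0 (by exact_mod_cast hodd0) (by rw [← h, habs])
  · exact key (-n0) (by simpa using (by exact_mod_cast hodd0 : Odd (n0:ℤ)).neg)
      (by have : -m = (n0:ℤ) * 2 ^ k := by rw [← h, habs]
          linarith [this])

lemma pow_bounds (P : ℕ) (emin emax i : ℤ) (h : (2:ℝ) ^ i ∈ Vf P emin emax) :
    emin - P + 1 ≤ i ∧ i ≤ emax := by
  obtain ⟨m, e, h1, h2, h3, h4⟩ := h
  have hmr : (m:ℝ) = 2 ^ (i - (e - P + 1)) := by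
    rw [zpow_sub₀ (by norm_num : (2:ℝ) ≠ 0)]
    rw [eq_div_iff (tz_pos (e - (P:ℤ) + 1)).ne']
    exact h4.symm
  have hmpos : (0:ℤ) < m := by
    have : (0:ℝ) < (m:ℝ) := hmr ▸ tz_pos _
    exact_mod_cast this
  constructor
  · have h1' : (1:ℝ) ≤ (m:ℝ) := by exact_mod_cast hmpos
    rw [hmr] at h1'
    have : (2:ℝ) ^ (0:ℤ) ≤ 2 ^ (i - (e - P + 1)) := by rwa [zpow_zero]
    have := (zpow_le_zpow_iff_right₀ (by norm_num : (1:ℝ) < 2)).mp this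
    linarith
  · have h1' : (m:ℝ) < 2 ^ (P:ℤ) := by
      have : |(m:ℝ)| < 2 ^ (P:ℤ) := by
        rw [← Int.cast_abs, ← cast_pow_P]; exact_mod_cast h1
      exact lt_of_abs_lt this
    rw [hmr] at h1'
    have := (zpow_lt_zpow_iff_right₀ (by norm_num : (1:ℝ) < 2)).mp h1'
    linarith

lemma succ_mem (P : ℕ) (emin emax : ℤ) (hP : 1 ≤ P) (he : emin ≤ emax)
    (n w : ℤ) (hodd : Odd n) (hn : |n| < 2 ^ P) (hw : emin - P + 1 ≤ w)
    (habs : |(n:ℝ) * 2 ^ w| ≤ Mhi P emax)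
    (hlt : (n:ℝ) * 2 ^ w < Mhi P emax) :
    (n:ℝ) * 2 ^ w + 2 ^ (min w (emax - (P:ℤ) + 1)) ∈ Vf P emin emax := by
  have hP2 : (2:ℝ) ^ (P:ℤ) = (2:ℝ) ^ P := by rw [zpow_natCast]
  by_cases hwW : w ≤ emax - (P:ℤ) + 1
  · rw [min_eq_left hwW]
    have hval : (n:ℝ) * 2 ^ w + 2 ^ w = ((n + 1 : ℤ) : ℝ) * 2 ^ w := by push_cast; ring
    rw [hval]
    by_cases hb : |n + 1| < 2 ^ P
    · have hbr : |((n + 1 : ℤ) : ℝ)| < 2 ^ (P:ℤ) := by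
        rw [← Int.cast_abs, hP2]
        exact_mod_cast hb
      apply grid_mem P emin emax he _ _ hw
      · have : (2:ℝ) ^ (w + (P:ℤ)) = 2 ^ (P:ℤ) * 2 ^ w := by
          rw [← zpow_add₀ (by norm_num : (2:ℝ) ≠ 0)]; ring_nf
        rw [this]
        exact mul_lt_mul_of_pos_right hbr (tz_pos w)
      · calc |((n + 1 : ℤ) : ℝ)| * 2 ^ w < 2 ^ (P:ℤ) * 2 ^ w :=
              mul_lt_mul_of_pos_right hbr (tz_pos w)
          _ ≤ 2 ^ (P:ℤ) * 2 ^ (emax - (P:ℤ) + 1) :=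
              mul_le_mul_of_nonneg_left (tz_le hwW) (tz_pos _).le
          _ = 2 ^ (emax + 1) := by
              rw [← zpow_add₀ (by norm_num : (2:ℝ) ≠ 0)]; ring_nf
    · -- n + 1 = 2 ^ P
      have hb1 : n + 1 = 2 ^ P := by
        rcases abs_lt.mp hn with ⟨h1, h2⟩
        rcases abs_cases (n + 1) with ⟨h3, _⟩ | ⟨h3, _⟩ <;> omega
      -- rule out w = emax - P + 1
      have hwlt : w < emax - (P:ℤ) + 1 := by
        rcases lt_or_eq_of_le hwW with h | h
        · exact h
        · exfalso
          have : (n:ℝ) * 2 ^ w = Mhi P emax := by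
            rw [Mhi, ← h]
            have : (n:ℝ) = 2 ^ P - 1 := by exact_mod_cast congrArg (Int.cast : ℤ → ℝ) (by omega : n = 2 ^ P - 1)
            rw [this]
          linarith
      have hval2 : ((n + 1 : ℤ) : ℝ) * 2 ^ w = ((1 : ℤ) : ℝ) * 2 ^ (w + (P:ℤ)) := by
        push_cast [hb1]
        rw [zpow_add₀ (by norm_num : (2:ℝ) ≠ 0), hP2]
        ring
      rw [hval2]
      apply grid_mem P emin emax he _ _ (by linarith)
      · simp only [Int.cast_one, abs_one, one_mul]
        exact tz_lt (by omega)
      · simp only [Int.cast_one, abs_one, one_mul]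
        exact tz_lt (by omega)
  · push_neg at hwW
    rw [min_eq_right hwW.le]
    set W : ℤ := emax - (P:ℤ) + 1 with hW
    set q : ℤ := n * 2 ^ (w - W).toNat with hq
    have hsval : (n:ℝ) * 2 ^ w = (q:ℝ) * 2 ^ W := by
      rw [hq]; push_cast
      rw [mul_assoc, rpow_toNat hwW.le]
    have hqabs : |q| ≤ 2 ^ P - 1 := by
      have hMW : Mhi P emax = ((2:ℝ) ^ P - 1) * 2 ^ W := by rw [Mhi, hW]
      have h1 : |(q:ℝ)| * 2 ^ W ≤ ((2:ℝ) ^ P - 1) * 2 ^ W := by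
        have e1 : |(q:ℝ)| * 2 ^ W = |(q:ℝ) * 2 ^ W| := by
          rw [abs_mul, abs_of_nonneg (tz_pos W).le]
        rw [e1, ← hsval, ← hMW]
        exact habs
      have h2 : |(q:ℝ)| ≤ (2:ℝ) ^ P - 1 := le_of_mul_le_mul_right h1 (tz_pos W)
      have h3 : ((|q| : ℤ) : ℝ) ≤ (((2:ℤ) ^ P - 1 : ℤ) : ℝ) := by
        push_cast
        exact h2
      exact_mod_cast h3
    have hqeven : q % 2 = 0 := by
      have hdvd : (2:ℤ) ∣ q := by
        rw [hq]
        exact dvd_mul_of_dvd_right (dvd_pow_self 2 (by omega : (w - W).toNat ≠ 0)) n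
      omega
    have hq1 : |q + 1| < 2 ^ P := by
      have hBeven : (2:ℤ) ^ P % 2 = 0 := by
        have : (2:ℤ) ∣ 2 ^ P := dvd_pow_self 2 (by omega)
        omega
      rcases abs_le.mp hqabs with ⟨h1, h2⟩
      rw [abs_lt]
      omega
    refine ⟨q + 1, emax, hq1, he, le_refl _, ?_⟩
    rw [hsval]
    push_cast
    ring

lemma pred_mem (P : ℕ) (emin emax : ℤ) (hP : 1 ≤ P) (he : emin ≤ emax)
    (n w : ℤ) (hodd : Odd n) (hn : |n| < 2 ^ P) (hw : emin - P + 1 ≤ w)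
    (habs : |(n:ℝ) * 2 ^ w| ≤ Mhi P emax)
    (hgt : -(Mhi P emax) < (n:ℝ) * 2 ^ w) :
    (n:ℝ) * 2 ^ w - 2 ^ (min w (emax - (P:ℤ) + 1)) ∈ Vf P emin emax := by
  have h1 := succ_mem P emin emax hP he (-n) w hodd.neg (by simpa using hn) hw
    (by push_cast; rw [neg_mul, abs_neg]; exact habs)
    (by push_cast; rw [neg_mul]; linarith)
  have h2 := neg_mem_Vf h1
  have : -(((-n : ℤ):ℝ) * 2 ^ w + 2 ^ (min w (emax - (P:ℤ) + 1)))
      = (n:ℝ) * 2 ^ w - 2 ^ (min w (emax - (P:ℤ) + 1)) := by push_cast; ring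
  rwa [this] at h2

lemma abs_real_lt_of_int {t : ℤ} {P : ℕ} (h : |t| < 2 ^ P) : |(t:ℝ)| < 2 ^ (P:ℤ) := by
  rw [← Int.cast_abs, ← cast_pow_P]
  exact_mod_cast h

lemma grid_eq3 {A B C c : ℤ} (hA : c ≤ A) (hB : c ≤ B) (hC : c ≤ C) (mB mC : ℤ) :
    ((2 ^ (A - c).toNat + mB * 2 ^ (B - c).toNat - mC * 2 ^ (C - c).toNat : ℤ) : ℝ) * 2 ^ c
      = 2 ^ A + (mB:ℝ) * 2 ^ B - (mC:ℝ) * 2 ^ C := by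
  push_cast
  rw [sub_mul, add_mul, mul_assoc, mul_assoc, rpow_toNat hA, rpow_toNat hB, rpow_toNat hC]

theorem extractScalar_eft
    (P : ℕ) (emin emax : ℤ) (hP : 1 ≤ P) (he : emin ≤ emax)
    (i j : ℤ) (hj : 0 ≤ j)
    (σ x s xh xl : ℝ)
    (hσ : σ = (2 : ℝ) ^ i) (hσV : σ ∈ Vf P emin emax)
    (hx : x ∈ Vf P emin emax) (hxb : |x| ≤ (2 : ℝ) ^ (-j) * σ)
    (hbound : |σ + x| ≤ Mhi P emax)
    (hs : Nearest (Vf P emin emax) (σ + x) s)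
    (hxh : xh = s - σ)
    (hxl : Faithful (Vf P emin emax) (x - xh) xl) :
    x = xh + xl := by
  obtain ⟨hsV, hnear⟩ := hs
  suffices hd : σ + x - s ∈ Vf P emin emax by
    have h1 : x - xh = σ + x - s := by rw [hxh]; ring
    have h2 := hxl.2.1 (by rw [h1]; exact hd)
    rw [h2]; rw [hxh]; ring
  obtain ⟨mx, ex, hmx, hex1, hex2, hxe⟩ := hx
  set ux : ℤ := ex - (P:ℤ) + 1 with hux
  obtain ⟨hi1, hi2⟩ := pow_bounds P emin emax i (hσ ▸ hσV)
  have hσpos : (0:ℝ) < σ := hσ ▸ tz_pos i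
  have hxσ : |x| ≤ σ := by
    calc |x| ≤ 2 ^ (-j) * σ := hxb
      _ ≤ 1 * σ := by
          apply mul_le_mul_of_nonneg_right _ hσpos.le
          have := tz_le (by omega : -j ≤ 0)
          rwa [zpow_zero] at this
      _ = σ := one_mul σ
  have hdx : |σ + x - s| ≤ |x| := by
    have h := hnear σ hσV
    have e1 : |σ - (σ + x)| = |x| := by rw [show σ - (σ + x) = -x by ring, abs_neg]
    have e2 : |σ + x - s| = |s - (σ + x)| := by rw [abs_sub_comm]
    rw [e2]; rw [e1] at h; exact h
  have hdσ : |σ + x - s| ≤ 2 ^ i := hσ ▸ (hdx.trans hxσ)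
  have hdemax : |σ + x - s| < 2 ^ (emax + 1) :=
    lt_of_le_of_lt (hdσ.trans (tz_le hi2)) (tz_lt (by omega))
  have hxabs : |x| < 2 ^ (ux + (P:ℤ)) := by
    rw [hxe, abs_mul, abs_of_nonneg (tz_pos ux).le]
    calc |(mx:ℝ)| * 2 ^ ux < 2 ^ (P:ℤ) * 2 ^ ux :=
          mul_lt_mul_of_pos_right (abs_real_lt_of_int hmx) (tz_pos ux)
      _ = 2 ^ (ux + (P:ℤ)) := by
          rw [← zpow_add₀ (by norm_num : (2:ℝ) ≠ 0)]; ring_nf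
  obtain ⟨ms, es, hms, hes1, hes2, hse⟩ := hsV
  by_cases hms0 : ms = 0
  · have hs0 : s = 0 := by rw [hse, hms0]; simp
    set c : ℤ := min i ux with hcdef
    have hci : c ≤ i := min_le_left _ _
    have hcu : c ≤ ux := min_le_right _ _
    have heq : σ + x - s
        = ((2 ^ ((i - c).toNat) + mx * 2 ^ ((ux - c).toNat)
            - 0 * 2 ^ ((c - c).toNat) : ℤ) : ℝ) * 2 ^ c := by
      rw [grid_eq3 hci hcu (le_refl c), hσ, hxe, hs0]
      push_cast; ring
    rw [heq]
    have e : |((2 ^ ((i - c).toNat) + mx * 2 ^ ((ux - c).toNat)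
        - 0 * 2 ^ ((c - c).toNat) : ℤ) : ℝ)| * 2 ^ c = |σ + x - s| := by
      rw [heq, abs_mul, abs_of_nonneg (tz_pos c).le]
    apply grid_mem P emin emax he _ _ (le_min (by omega) (by omega))
    · rw [e]
      rcases min_cases i ux with ⟨h1, _⟩ | ⟨h1, _⟩
      · rw [h1]
        exact lt_of_le_of_lt hdσ (tz_lt (by omega))
      · rw [h1]
        exact lt_of_le_of_lt hdx hxabs
    · rw [e]; exact hdemax
  · obtain ⟨k, n, hnodd, hnle, hmse⟩ := int_odd_decomp ms hms0
    set w : ℤ := es - (P:ℤ) + 1 + k with hwdef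
    have hsw : s = (n:ℝ) * 2 ^ w := by
      rw [hwdef, zpow_add₀ (by norm_num : (2:ℝ) ≠ 0), zpow_natCast, hse, hmse]
      push_cast
      ring
    have hnlt : |n| < 2 ^ P := lt_of_le_of_lt hnle hms
    have hw1 : emin - (P:ℤ) + 1 ≤ w := by omega
    by_cases hcw : min i ux ≤ w
    · set c : ℤ := min i ux with hcdef
      have hci : c ≤ i := min_le_left _ _
      have hcu : c ≤ ux := min_le_right _ _
      have heq : σ + x - s
          = ((2 ^ ((i - c).toNat) + mx * 2 ^ ((ux - c).toNat)
              - n * 2 ^ ((w - c).toNat) : ℤ) : ℝ) * 2 ^ c := by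
        rw [grid_eq3 hci hcu hcw, hσ, hxe, hsw]
      rw [heq]
      have e : |((2 ^ ((i - c).toNat) + mx * 2 ^ ((ux - c).toNat)
          - n * 2 ^ ((w - c).toNat) : ℤ) : ℝ)| * 2 ^ c = |σ + x - s| := by
        rw [heq, abs_mul, abs_of_nonneg (tz_pos c).le]
      apply grid_mem P emin emax he _ _ (le_min (by omega) (by omega))
      · rw [e]
        rcases min_cases i ux with ⟨h1, _⟩ | ⟨h1, _⟩
        · rw [h1]
          exact lt_of_le_of_lt hdσ (tz_lt (by omega))
        · rw [h1]
          exact lt_of_le_of_lt hdx hxabs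
      · rw [e]; exact hdemax
    · push_neg at hcw
      set g : ℤ := min w (emax - (P:ℤ) + 1) with hgdef
      have hgw : g ≤ w := min_le_left _ _
      have hsMhi : |(n:ℝ) * 2 ^ w| ≤ Mhi P emax := by
        rw [← hsw]
        exact abs_le_Mhi ⟨ms, es, hms, hes1, hes2, hse⟩
      have hgpos : (0:ℝ) < 2 ^ g := tz_pos g
      have h2g : (2:ℝ) ^ g = 2 * 2 ^ (g - 1) := by
        rw [zpow_sub_one₀ (by norm_num : (2:ℝ) ≠ 0)]
        ring
      have hclose : |σ + x - s| ≤ 2 ^ (g - 1) := by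
        rcases lt_trichotomy (σ + x) s with hlt | heqc | hgt
        · have hsub := pred_mem P emin emax hP he n w hnodd hnlt hw1 hsMhi
            (by rw [← hsw]; have := (abs_le.mp hbound).1; linarith)
          rw [← hsw, ← hgdef] at hsub
          have h3 := hnear (s - 2 ^ g) hsub
          have h5 : |s - (σ + x)| = s - (σ + x) := abs_of_pos (by linarith)
          rw [h5] at h3
          have h6 : |σ + x - s| = s - (σ + x) := by rw [abs_sub_comm, h5]
          rw [h6]
          rcases abs_cases (s - 2 ^ g - (σ + x)) with ⟨h4, _⟩ | ⟨h4, _⟩ <;>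
            rw [h4] at h3 <;> linarith
        · rw [heqc, sub_self, abs_zero]; exact (tz_pos _).le
        · have hsub := succ_mem P emin emax hP he n w hnodd hnlt hw1 hsMhi
            (by rw [← hsw]; have := (abs_le.mp hbound).2; linarith)
          rw [← hsw, ← hgdef] at hsub
          have h3 := hnear (s + 2 ^ g) hsub
          have h5 : |s - (σ + x)| = (σ + x) - s := by rw [abs_sub_comm]; exact abs_of_pos (by linarith)
          rw [h5] at h3
          have h6 : |σ + x - s| = (σ + x) - s := abs_of_pos (by linarith)
          rw [h6]
          rcases abs_cases (s + 2 ^ g - (σ + x)) with ⟨h4, _⟩ | ⟨h4, _⟩ <;>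
            rw [h4] at h3 <;> linarith
      have heq : σ + x - s
          = ((2 ^ ((i - w).toNat) + mx * 2 ^ ((ux - w).toNat)
              - n * 2 ^ ((w - w).toNat) : ℤ) : ℝ) * 2 ^ w := by
        rw [grid_eq3 (by omega : w ≤ i) (by omega : w ≤ ux) (le_refl w), hσ, hxe, hsw]
      rw [heq]
      have e : |((2 ^ ((i - w).toNat) + mx * 2 ^ ((ux - w).toNat)
          - n * 2 ^ ((w - w).toNat) : ℤ) : ℝ)| * 2 ^ w = |σ + x - s| := by
        rw [heq, abs_mul, abs_of_nonneg (tz_pos w).le]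
      apply grid_mem P emin emax he _ _ hw1
      · rw [e]
        exact lt_of_le_of_lt hclose (tz_lt (by omega))
      · rw [e]; exact hdemax
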